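/- Let G(z) be the Green function of the linearization of a real M×N matrix X with ‖X*X‖₂ ≤ K and z = E + iη with c ≤ |z| ≤ C, η > 0. Then (1/N²)·∑_{i,j=1}^{N+M} |G_{ij}(z)|² ≤ C′·(1 + K)²·( Im m(z)/(N η) + 1/N ), where m(z) = (1/N)∑_{v=1}^{N} G_{vv}(z) and C′ depends only on c, C. -/

import Mathlib

open Matrix

/-!
The inverse of the linearization is `G = [[R, R X*], [X R, X R X* - 1]]` with
`R = (X*X - z)⁻¹`. Multiplying by `X` or `X*` costs at most a factor `‖X*X‖ ≤ K` in squared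
Frobenius norm, so `∑ |G_{ij}|² ≤ 2 (1 + K)² ∑ |R_{ik}|² + 2M`, the `2M` coming from the identity
block. The Ward identity `∑ |R_{ik}|² = Im tr R / η = N Im m / η`, a consequence of the resolvent
identity `R - R* = 2iη R R*`, and `M ≤ ϱ₀ N` then give the bound.
-/

namespace Matrix

variable {l m n : Type*} [Fintype l] [Fintype m] [Fintype n]

lemma trace_mul_conjTranspose_self (B : Matrix m n ℂ) :
    (B * Bᴴ).trace = ((∑ i, ∑ k, ‖B i k‖ ^ 2 : ℝ) : ℂ) := by
  simp only [trace, diag_apply, mul_apply, conjTranspose_apply, Complex.ofReal_sum]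
  exact Finset.sum_congr rfl fun i _ => Finset.sum_congr rfl fun k _ => by
    rw [Complex.star_def, Complex.mul_conj, Complex.normSq_eq_norm_sq, Complex.ofReal_pow]

section Hermitian

variable [DecidableEq n] {A : Matrix n n ℂ} {z : ℂ}

lemma IsHermitian.isUnit_det_sub_smul_one (hA : A.IsHermitian) (hz : z.im ≠ 0) :
    IsUnit (A - z • 1).det := by
  have hzA : z ∉ spectrum ℂ A := by
    rw [hA.spectrum_eq_image_range]
    rintro ⟨r, -, rfl⟩
    exact hz (by simp)
  rwa [spectrum.mem_iff, not_not, Algebra.algebraMap_eq_smul_one, ← neg_sub, IsUnit.neg_iff,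
    isUnit_iff_isUnit_det] at hzA

lemma IsHermitian.resolvent_sub_conjTranspose (hA : A.IsHermitian) (hz : z.im ≠ 0) :
    (A - z • 1)⁻¹ - (A - z • 1)⁻¹ᴴ = (z - star z) • ((A - z • 1)⁻¹ * (A - z • 1)⁻¹ᴴ) := by
  have hconj : (A - z • 1)ᴴ = A - star z • 1 := by
    rw [conjTranspose_sub, hA.eq, conjTranspose_smul, conjTranspose_one]
  have hdet := hA.isUnit_det_sub_smul_one hz
  have hdet' : IsUnit (A - z • 1)ᴴ.det := by rw [det_conjTranspose]; exact hdet.star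
  set R := (A - z • 1)⁻¹
  have hRH : Rᴴ = (A - z • 1)ᴴ⁻¹ := conjTranspose_nonsing_inv _
  calc R - Rᴴ = R * ((A - z • 1)ᴴ * Rᴴ) - R * (A - z • 1) * Rᴴ := by
        rw [hRH, mul_nonsing_inv _ hdet', nonsing_inv_mul _ hdet, mul_one, one_mul]
    _ = R * ((A - z • 1)ᴴ - (A - z • 1)) * Rᴴ := by noncomm_ring
    _ = (z - star z) • (R * Rᴴ) := by
        rw [hconj, sub_sub_sub_cancel_left, ← sub_smul, mul_smul_comm, mul_one, smul_mul_assoc]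

lemma IsHermitian.sum_norm_sq_resolvent (hA : A.IsHermitian) (hz : z.im ≠ 0) :
    ∑ i, ∑ k, ‖(A - z • 1)⁻¹ i k‖ ^ 2 = ((A - z • 1)⁻¹.trace).im / z.im := by
  have htr := congrArg (fun B => (trace B).im) (hA.resolvent_sub_conjTranspose hz)
  simp only [trace_sub, trace_smul, trace_conjTranspose, trace_mul_conjTranspose_self,
    smul_eq_mul, Complex.sub_im, Complex.star_def, Complex.conj_im, Complex.mul_im,
    Complex.sub_re, Complex.conj_re, Complex.ofReal_re, Complex.ofReal_im] at htr
  field_simp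
  linarith

end Hermitian

section OpNorm

open scoped Matrix.Norms.L2Operator

variable [DecidableEq n]

lemma sum_norm_sq_mulVec_le (Y : Matrix m n ℂ) (v : n → ℂ) :
    ∑ i, ‖(Y *ᵥ v) i‖ ^ 2 ≤ ‖toEuclideanCLM (𝕜 := ℂ) (Yᴴ * Y)‖ * ∑ j, ‖v j‖ ^ 2 := by
  have h := Y.l2_opNorm_mulVec (WithLp.toLp 2 v)
  rw [l2_opNorm_toEuclideanCLM, l2_opNorm_conjTranspose_mul_self]
  have h2 := pow_le_pow_left₀ (norm_nonneg _) h 2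
  rw [mul_pow, EuclideanSpace.norm_sq_eq, EuclideanSpace.norm_sq_eq] at h2
  simpa [← sq] using h2

lemma sum_norm_sq_mul_le (Y : Matrix m n ℂ) (B : Matrix n l ℂ) :
    ∑ i, ∑ k, ‖(Y * B) i k‖ ^ 2 ≤
      ‖toEuclideanCLM (𝕜 := ℂ) (Yᴴ * Y)‖ * ∑ j, ∑ k, ‖B j k‖ ^ 2 := by
  rw [Finset.sum_comm, Finset.sum_comm (γ := n), Finset.mul_sum]
  exact Finset.sum_le_sum fun k _ => Y.sum_norm_sq_mulVec_le (fun j => B j k)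

end OpNorm

lemma sum_norm_sq_conjTranspose (B : Matrix m n ℂ) :
    ∑ i, ∑ k, ‖Bᴴ i k‖ ^ 2 = ∑ i, ∑ k, ‖B i k‖ ^ 2 := by
  rw [Finset.sum_comm]
  simp [conjTranspose_apply]

lemma sum_norm_sq_mul_conjTranspose_le [DecidableEq n] (Y : Matrix m n ℂ) (B : Matrix l n ℂ) :
    ∑ i, ∑ k, ‖(B * Yᴴ) i k‖ ^ 2 ≤
      ‖toEuclideanCLM (𝕜 := ℂ) (Yᴴ * Y)‖ * ∑ j, ∑ k, ‖B j k‖ ^ 2 := by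
  rw [← sum_norm_sq_conjTranspose, ← sum_norm_sq_conjTranspose B, conjTranspose_mul,
    conjTranspose_conjTranspose]
  exact sum_norm_sq_mul_le Y Bᴴ

lemma sum_norm_sq_sub_one_le [DecidableEq m] (B : Matrix m m ℂ) :
    ∑ i, ∑ k, ‖(B - 1) i k‖ ^ 2 ≤ 2 * ∑ i, ∑ k, ‖B i k‖ ^ 2 + 2 * Fintype.card m := by
  have hpt (a b : ℂ) : ‖a - b‖ ^ 2 ≤ 2 * ‖a‖ ^ 2 + 2 * ‖b‖ ^ 2 := by
    nlinarith [norm_sub_le a b, norm_nonneg (a - b), sq_nonneg (‖a‖ - ‖b‖)]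
  have hone : ∑ i : m, ∑ k : m, ‖(1 : Matrix m m ℂ) i k‖ ^ 2 = Fintype.card m := by
    simp [one_apply, apply_ite (‖·‖), ite_pow]
  calc ∑ i, ∑ k, ‖(B - 1) i k‖ ^ 2
      ≤ ∑ i, ∑ k, (2 * ‖B i k‖ ^ 2 + 2 * ‖(1 : Matrix m m ℂ) i k‖ ^ 2) := by
        gcongr with i _ k _
        exact hpt _ _
    _ = 2 * ∑ i, ∑ k, ‖B i k‖ ^ 2 + 2 * Fintype.card m := by
        simp only [Finset.sum_add_distrib, ← Finset.mul_sum, hone]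

lemma sum_norm_sq_fromBlocks {q : Type*} [Fintype q] (A : Matrix n l ℂ)
    (B : Matrix n q ℂ) (C : Matrix m l ℂ) (D : Matrix m q ℂ) :
    ∑ i, ∑ k, ‖fromBlocks A B C D i k‖ ^ 2 =
      ∑ i, ∑ k, ‖A i k‖ ^ 2 + ∑ i, ∑ k, ‖B i k‖ ^ 2 +
        (∑ i, ∑ k, ‖C i k‖ ^ 2 + ∑ i, ∑ k, ‖D i k‖ ^ 2) := by
  simp only [Fintype.sum_sum_type, fromBlocks_apply₁₁, fromBlocks_apply₁₂, fromBlocks_apply₂₁,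
    fromBlocks_apply₂₂, Finset.sum_add_distrib]
  ring

lemma inv_fromBlocks_linearization [DecidableEq m] [DecidableEq n] (Y : Matrix m n ℂ) (z : ℂ)
    (hdet : IsUnit (Yᴴ * Y - z • 1).det) :
    (fromBlocks (-(z • 1)) Yᴴ Y (-1))⁻¹ =
      fromBlocks (Yᴴ * Y - z • 1)⁻¹ ((Yᴴ * Y - z • 1)⁻¹ * Yᴴ)
        (Y * (Yᴴ * Y - z • 1)⁻¹) (Y * (Yᴴ * Y - z • 1)⁻¹ * Yᴴ - 1) := by
  set R := (Yᴴ * Y - z • 1)⁻¹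
  have hR : Yᴴ * (Y * R) - z • R = 1 := by
    rw [← mul_nonsing_inv _ hdet, Matrix.sub_mul, Matrix.smul_mul, Matrix.one_mul,
      Matrix.mul_assoc]
  apply inv_eq_right_inv
  rw [fromBlocks_multiply, ← fromBlocks_one]
  congr 1
  · rw [Matrix.neg_mul, Matrix.smul_mul, Matrix.one_mul, neg_add_eq_sub, hR]
  · have hRY : Yᴴ * (Y * (R * Yᴴ)) - z • (R * Yᴴ) - Yᴴ = 0 := by
      rw [sub_eq_zero]
      simpa only [Matrix.sub_mul, Matrix.smul_mul, Matrix.mul_assoc, Matrix.one_mul] using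
        congrArg (· * Yᴴ) hR
    rw [← hRY, Matrix.neg_mul, Matrix.smul_mul, Matrix.one_mul, Matrix.mul_sub, Matrix.mul_one,
      Matrix.mul_assoc]
    abel
  · rw [Matrix.neg_mul, Matrix.one_mul, add_neg_cancel]
  · rw [Matrix.neg_mul, Matrix.one_mul, Matrix.mul_assoc, neg_sub, add_sub_cancel]

lemma sum_norm_sq_fromBlocks_linearization_le [DecidableEq m] [DecidableEq n]
    (Y : Matrix m n ℂ) (R : Matrix n n ℂ) {K : ℝ} (hK : ‖toEuclideanCLM (𝕜 := ℂ) (Yᴴ * Y)‖ ≤ K) :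
    ∑ i, ∑ k, ‖fromBlocks R (R * Yᴴ) (Y * R) (Y * R * Yᴴ - 1) i k‖ ^ 2 ≤
      2 * (1 + K) ^ 2 * ∑ i, ∑ k, ‖R i k‖ ^ 2 + 2 * Fintype.card m := by
  set s := ∑ i, ∑ k, ‖R i k‖ ^ 2
  have hs : 0 ≤ s := by positivity
  have hK0 : 0 ≤ K := (norm_nonneg _).trans hK
  have hRY : ∑ i, ∑ k, ‖(R * Yᴴ) i k‖ ^ 2 ≤ K * s :=
    (sum_norm_sq_mul_conjTranspose_le Y R).trans (by gcongr)
  have hYR : ∑ i, ∑ k, ‖(Y * R) i k‖ ^ 2 ≤ K * s :=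
    (sum_norm_sq_mul_le Y R).trans (by gcongr)
  have hYRY : ∑ i, ∑ k, ‖(Y * R * Yᴴ) i k‖ ^ 2 ≤ K * (K * s) :=
    (sum_norm_sq_mul_conjTranspose_le Y (Y * R)).trans (by gcongr)
  rw [sum_norm_sq_fromBlocks R (R * Yᴴ) (Y * R) (Y * R * Yᴴ - 1)]
  nlinarith [sum_norm_sq_sub_one_le (Y * R * Yᴴ), mul_nonneg hK0 hs]

end Matrix

theorem statement16_general (c C ϱ₀ : ℝ) (hϱ₀ : 0 < ϱ₀) :
    ∃ C' : ℝ, 0 < C' ∧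
      ∀ (M N : ℕ) (X : Matrix (Fin M) (Fin N) ℝ) (K : ℝ) (z : ℂ),
        0 < N → N ≤ M → (M : ℝ) ≤ ϱ₀ * N →
        0 ≤ K →
        ‖Matrix.toEuclideanCLM (𝕜 := ℂ)
            ((X.map Complex.ofReal)ᴴ * X.map Complex.ofReal)‖ ≤ K →
        0 < z.im → c ≤ ‖z‖ → ‖z‖ ≤ C →
        let H : Matrix (Fin N ⊕ Fin M) (Fin N ⊕ Fin M) ℂ :=
          Matrix.fromBlocks (-(z • 1)) (X.map Complex.ofReal)ᴴ (X.map Complex.ofReal) (-1)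
        let G := H⁻¹
        let m : ℂ := (1 / (N : ℂ)) * ∑ v : Fin N, G (Sum.inl v) (Sum.inl v)
        (1 / (N : ℝ) ^ 2) * ∑ i : Fin N ⊕ Fin M, ∑ j : Fin N ⊕ Fin M,
            ‖G i j‖ ^ 2
          ≤ C' * (1 + K) ^ 2 * (m.im / (N * z.im) + 1 / N) := by
  refine ⟨2 * (1 + ϱ₀), by positivity, ?_⟩
  intro M N X K z hN _ hMN hK0 hK hz _ _ H G m
  set Y := X.map Complex.ofReal
  set R := (Yᴴ * Y - z • 1)⁻¹
  have hHerm : (Yᴴ * Y).IsHermitian := isHermitian_conjTranspose_mul_self Y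
  have hG : G = fromBlocks R (R * Yᴴ) (Y * R) (Y * R * Yᴴ - 1) :=
    inv_fromBlocks_linearization Y z (hHerm.isUnit_det_sub_smul_one hz.ne')
  have hNpos : (0 : ℝ) < N := by exact_mod_cast hN
  have hm : (N : ℝ) * m.im = R.trace.im := by
    simp only [m, hG, fromBlocks_apply₁₁, trace, diag_apply]
    rw [one_div, ← Complex.ofReal_natCast, ← Complex.ofReal_inv, Complex.im_ofReal_mul,
      ← mul_assoc, mul_inv_cancel₀ hNpos.ne', one_mul]
  have hward : ∑ i, ∑ k, ‖R i k‖ ^ 2 = N * m.im / z.im := by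
    rw [hHerm.sum_norm_sq_resolvent hz.ne', hm]
  have hbound := sum_norm_sq_fromBlocks_linearization_le Y R hK
  rw [← hG, hward, Fintype.card_fin] at hbound
  have hw : 0 ≤ N * m.im / z.im := hward ▸ by positivity
  have hK1 : 1 ≤ (1 + K) ^ 2 := one_le_pow₀ (le_add_of_nonneg_right hK0)
  calc 1 / (N : ℝ) ^ 2 * ∑ i, ∑ j, ‖G i j‖ ^ 2
      ≤ 1 / (N : ℝ) ^ 2 * (2 * (1 + K) ^ 2 * (N * m.im / z.im) + 2 * (ϱ₀ * N)) := by
        gcongr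
        linarith
    _ ≤ 1 / (N : ℝ) ^ 2 * (2 * (1 + ϱ₀) * (1 + K) ^ 2 * (N * m.im / z.im + N)) := by
        gcongr
        nlinarith [mul_le_mul_of_nonneg_left hK1 (mul_pos hϱ₀ hNpos).le,
          mul_nonneg (mul_nonneg hϱ₀.le (sq_nonneg (1 + K))) hw,
          mul_nonneg (sq_nonneg (1 + K)) hNpos.le]
    _ = 2 * (1 + ϱ₀) * (1 + K) ^ 2 * (m.im / (N * z.im) + 1 / N) := by
        field_simp

/-- For the Green function `G(z)` of the linearization of a real `M × N`
matrix `X` (with `N ≤ M ≤ ϱ₀ N`, the standing bounded-aspect-ratio assumption of the paper)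
with `‖X*X‖₂ ≤ K` and `z = E + iη`, `c ≤ |z| ≤ C`, `η > 0`, one has
`(1/N²) ∑_{i,j} |G_{ij}(z)|² ≤ C' (1+K)² (Im m(z)/(Nη) + 1/N)` where
`m(z) = (1/N) ∑_{v ≤ N} G_{vv}(z)` and `C'` depends only on `c`, `C` (and `ϱ₀`). -/
theorem statement16 (c C ϱ₀ : ℝ) (hc : 0 < c) (hC : 0 < C) (hϱ₀ : 0 < ϱ₀) :
    ∃ C' : ℝ, 0 < C' ∧
      ∀ (M N : ℕ) (X : Matrix (Fin M) (Fin N) ℝ) (K : ℝ) (z : ℂ),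
        0 < N → N ≤ M → (M : ℝ) ≤ ϱ₀ * N →
        0 ≤ K →
        ‖Matrix.toEuclideanCLM (𝕜 := ℂ)
            ((X.map Complex.ofReal)ᴴ * X.map Complex.ofReal)‖ ≤ K →
        0 < z.im → c ≤ ‖z‖ → ‖z‖ ≤ C →
        let H : Matrix (Fin N ⊕ Fin M) (Fin N ⊕ Fin M) ℂ :=
          Matrix.fromBlocks (-(z • 1)) (X.map Complex.ofReal)ᴴ (X.map Complex.ofReal) (-1)
        let G := H⁻¹
        let m : ℂ := (1 / (N : ℂ)) * ∑ v : Fin N, G (Sum.inl v) (Sum.inl v)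
        (1 / (N : ℝ) ^ 2) * ∑ i : Fin N ⊕ Fin M, ∑ j : Fin N ⊕ Fin M,
            ‖G i j‖ ^ 2
          ≤ C' * (1 + K) ^ 2 * (m.im / (N * z.im) + 1 / N) :=
  statement16_general c C ϱ₀ hϱ₀
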